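/- Let z ∼ N(0, I_n) and c ∈ R^n fixed. For α > 0, β > 0 and δ > 0 with 1 − 2δ(1 − α) > 0, the probability P((1−α)‖z‖² − 2α·cᵀz − α‖c‖² − βn ≥ 0) is at most exp(−(n/2)·log(1 − 2δ(1 − α)) − δβn + δα·((2δ − 1)/(1 − 2δ(1 − α)))·‖c‖²). -/

import Mathlib

open MeasureTheory ProbabilityTheory Real

/-! Chernoff's bound `P(X ≥ 0) ≤ E exp(δX)` reduces the claim to an exponential moment of a
quadratic polynomial in `z`. It factors over the independent coordinates, and each factor
`E exp(a z² + b z) = (1 - 2a)^(-1/2) exp(b² / (2(1 - 2a)))` is a Gaussian integral, computed by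
completing the square. -/

lemma exp_neg_mul_sq_add_mul_eq {b : ℝ} (hb : b ≠ 0) (c x : ℝ) :
    exp (-b * x ^ 2 + c * x) = exp (c ^ 2 / (4 * b)) * exp (-b * (x - c / (2 * b)) ^ 2) := by
  rw [← exp_add]
  congr 1
  field_simp
  ring

lemma integrable_exp_neg_mul_sq_add_mul {b : ℝ} (hb : 0 < b) (c : ℝ) :
    Integrable fun x => exp (-b * x ^ 2 + c * x) := by
  simp_rw [exp_neg_mul_sq_add_mul_eq hb.ne']
  exact ((integrable_exp_neg_mul_sq hb).comp_sub_right _).const_mul _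

lemma integral_exp_neg_mul_sq_add_mul {b : ℝ} (hb : 0 < b) (c : ℝ) :
    ∫ x, exp (-b * x ^ 2 + c * x) = √(π / b) * exp (c ^ 2 / (4 * b)) := by
  simp_rw [exp_neg_mul_sq_add_mul_eq hb.ne']
  rw [integral_const_mul, integral_sub_right_eq_self (fun x => exp (-b * x ^ 2)), integral_gaussian,
    mul_comm]

lemma lintegral_exp_quadratic_gaussianReal {a : ℝ} (ha : 2 * a < 1) (b : ℝ) :
    ∫⁻ x, ENNReal.ofReal (exp (a * x ^ 2 + b * x)) ∂gaussianReal 0 1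
      = ENNReal.ofReal (exp (b ^ 2 / (2 * (1 - 2 * a)) - log (1 - 2 * a) / 2)) := by
  have ht : 0 < (1 - 2 * a) / 2 := by linarith
  have hdensity : ∀ x, gaussianPDFReal 0 1 x * exp (a * x ^ 2 + b * x)
      = (√(2 * π))⁻¹ * exp (-((1 - 2 * a) / 2) * x ^ 2 + b * x) := fun x => by
    rw [gaussianPDFReal, NNReal.coe_one, mul_one, mul_assoc, ← exp_add]
    congr 2
    ring
  rw [gaussianReal_of_var_ne_zero 0 one_ne_zero,
    lintegral_withDensity_eq_lintegral_mul _ (measurable_gaussianPDF 0 1) (by fun_prop)]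
  simp only [Pi.mul_apply, gaussianPDF, ← ENNReal.ofReal_mul (gaussianPDFReal_nonneg 0 1 _),
    hdensity]
  rw [← ofReal_integral_eq_lintegral_ofReal
      ((integrable_exp_neg_mul_sq_add_mul ht b).const_mul _) (ae_of_all _ fun x => by positivity),
    integral_const_mul, integral_exp_neg_mul_sq_add_mul ht b]
  have hsqrt : exp (log (1 - 2 * a) / 2) = √(1 - 2 * a) := by
    rw [sqrt_eq_rpow, rpow_def_of_pos (by linarith), div_eq_mul_one_div]
  have hsplit : √(π / ((1 - 2 * a) / 2)) = √(2 * π) / √(1 - 2 * a) := by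
    rw [← sqrt_div' _ (by linarith)]
    congr 1
    field_simp
  have hsqrt2π : 0 < √(2 * π) := by positivity
  rw [exp_sub, hsqrt, hsplit, show 4 * ((1 - 2 * a) / 2) = 2 * (1 - 2 * a) by ring]
  field_simp

lemma lintegral_pi_prod_eq_prod {ι : Type*} [Fintype ι] {Ω : ι → Type*}
    [∀ i, MeasurableSpace (Ω i)] (μ : ∀ i, Measure (Ω i)) [∀ i, IsProbabilityMeasure (μ i)]
    {f : ∀ i, Ω i → ENNReal} (hf : ∀ i, Measurable (f i)) :
    ∫⁻ x, ∏ i, f i (x i) ∂Measure.pi μ = ∏ i, ∫⁻ y, f i y ∂μ i := by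
  rw [lintegral_prod_eq_prod_lintegral_of_indepFun _ _ (iIndepFun_pi fun i => (hf i).aemeasurable)
    fun i => (hf i).comp (measurable_pi_apply i)]
  exact Finset.prod_congr rfl fun i _ => (measurePreserving_eval μ i).lintegral_comp (hf i)

lemma measure_nonneg_le_lintegral_exp_mul {Ω : Type*} [MeasurableSpace Ω] (μ : Measure Ω)
    {X : Ω → ℝ} (hX : Measurable X) {t : ℝ} (ht : 0 ≤ t) :
    μ {ω | 0 ≤ X ω} ≤ ∫⁻ ω, ENNReal.ofReal (exp (t * X ω)) ∂μ := by
  calc μ {ω | 0 ≤ X ω} ≤ μ {ω | 1 ≤ ENNReal.ofReal (exp (t * X ω))} :=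
        measure_mono fun ω hω => ENNReal.one_le_ofReal.mpr (one_le_exp (mul_nonneg ht hω))
    _ ≤ ∫⁻ ω, ENNReal.ofReal (exp (t * X ω)) ∂μ := by
        simpa using mul_meas_ge_le_lintegral₀ (hX.const_mul t).exp.ennreal_ofReal.aemeasurable 1

lemma lintegral_exp_quadratic_pi_gaussianReal {ι : Type*} [Fintype ι] {a : ℝ} (ha : 2 * a < 1)
    (b : ι → ℝ) :
    ∫⁻ z, ENNReal.ofReal (exp (a * ∑ i, z i ^ 2 + ∑ i, b i * z i))
        ∂Measure.pi (fun _ => gaussianReal 0 1)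
      = ENNReal.ofReal
          (exp (∑ i, b i ^ 2 / (2 * (1 - 2 * a)) - Fintype.card ι * (log (1 - 2 * a) / 2))) := by
  have hfactor : ∀ z : ι → ℝ, ENNReal.ofReal (exp (a * ∑ i, z i ^ 2 + ∑ i, b i * z i))
      = ∏ i, ENNReal.ofReal (exp (a * z i ^ 2 + b i * z i)) := fun z => by
    rw [← ENNReal.ofReal_prod_of_nonneg fun i _ => (exp_pos _).le, ← exp_sum, Finset.mul_sum,
      Finset.sum_add_distrib]
  simp_rw [hfactor]
  rw [lintegral_pi_prod_eq_prod _ (f := fun i x => ENNReal.ofReal (exp (a * x ^ 2 + b i * x)))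
    fun i => by fun_prop]
  simp_rw [lintegral_exp_quadratic_gaussianReal ha]
  rw [← ENNReal.ofReal_prod_of_nonneg fun i _ => (exp_pos _).le, ← exp_sum, Finset.sum_sub_distrib,
    Finset.sum_const, Finset.card_univ, nsmul_eq_mul]

theorem bad_region_probability_bound_general (n : ℕ) (c : Fin n → ℝ) (α β δ : ℝ)
    (hδ : 0 < δ) (hcond : 0 < 1 - 2*δ*(1 - α)) :
    ((Measure.pi fun _ : Fin n => gaussianReal 0 1)
        {z | 0 ≤ (1 - α) * ∑ l, (z l)^2 - 2*α * ∑ l, c l * z l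
              - α * ∑ l, (c l)^2 - β * n}).toReal
      ≤ Real.exp (-((n:ℝ)/2) * Real.log (1 - 2*δ*(1 - α)) - δ*β*n
          + δ*α*((2*δ - 1)/(1 - 2*δ*(1 - α))) * ∑ l, (c l)^2) := by
  set X : (Fin n → ℝ) → ℝ := fun z => (1 - α) * ∑ l, (z l)^2 - 2*α * ∑ l, c l * z l
    - α * ∑ l, (c l)^2 - β * n
  set K := -(δ * α * ∑ l, c l ^ 2) - δ * β * n
  have hX : Measurable X := by fun_prop
  have hδX : ∀ z, δ * X z = K + (δ * (1 - α) * ∑ l, z l ^ 2 + ∑ l, (-2 * δ * α * c l) * z l) := by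
    intro z
    simp only [X, K, mul_assoc, ← Finset.mul_sum]
    ring
  have ha : 2 * (δ * (1 - α)) < 1 := by linarith
  refine ENNReal.toReal_le_of_le_ofReal (exp_pos _).le ?_
  calc _ ≤ ∫⁻ z, ENNReal.ofReal (exp (δ * X z)) ∂Measure.pi (fun _ => gaussianReal 0 1) :=
        measure_nonneg_le_lintegral_exp_mul _ hX hδ.le
    _ = ENNReal.ofReal (exp K) * ENNReal.ofReal (exp (∑ l, (-2 * δ * α * c l) ^ 2
          / (2 * (1 - 2 * (δ * (1 - α)))) - n * (log (1 - 2 * (δ * (1 - α))) / 2))) := by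
        simp_rw [hδX, fun z => exp_add K z, ENNReal.ofReal_mul (exp_pos K).le]
        rw [lintegral_const_mul _ (by fun_prop), lintegral_exp_quadratic_pi_gaussianReal ha,
          Fintype.card_fin]
    _ = _ := by
        rw [← ENNReal.ofReal_mul (exp_pos _).le, ← exp_add]
        congr 2
        simp only [K, mul_pow, ← Finset.sum_div, ← Finset.mul_sum, ← mul_assoc]
        -- express everything through `t = 1 - 2δ(1 - α)`, so that `field_simp` sees one denominator
        rw [show 2 * δ - 1 = 2 * δ * α - (1 - 2 * δ * (1 - α)) by ring]
        generalize 1 - 2 * δ * (1 - α) = t at hcond ⊢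
        field_simp
        ring

/-- Chernoff bound on the bad-region event: for standard Gaussian `z` in `ℝⁿ` and a fixed
vector `c`, with `α, β, δ > 0` and `1 − 2δ(1−α) > 0`,
`P((1−α)‖z‖² − 2α cᵀz − α‖c‖² − βn ≥ 0)
  ≤ exp(−(n/2) log(1−2δ(1−α)) − δβn + δα (2δ−1)/(1−2δ(1−α)) ‖c‖²)`. -/
theorem bad_region_probability_bound (n : ℕ) (c : Fin n → ℝ) (α β δ : ℝ)
    (hα : 0 < α) (hβ : 0 < β) (hδ : 0 < δ) (hcond : 0 < 1 - 2*δ*(1 - α)) :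
    ((Measure.pi fun _ : Fin n => gaussianReal 0 1)
        {z | 0 ≤ (1 - α) * ∑ l, (z l)^2 - 2*α * ∑ l, c l * z l
              - α * ∑ l, (c l)^2 - β * n}).toReal
      ≤ Real.exp (-((n:ℝ)/2) * Real.log (1 - 2*δ*(1 - α)) - δ*β*n
          + δ*α*((2*δ - 1)/(1 - 2*δ*(1 - α))) * ∑ l, (c l)^2) :=
  bad_region_probability_bound_general n c α β δ hδ hcond
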